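/- Let U : ℝ^d → ℝ have gradient ξ = ∇U twice continuously differentiable, fix r > 0, and let ζ(t) = (x(t), w(t)) be a differentiable solution on an interval [0,T] of the ODE x'(t) = 2w(t), w'(t) = −2P(x(t))x(t) + 𝐛(x(t),w(t)), such that ξ(x(t)) ≠ 0 for all t ∈ [0,T]. If ξ̄(x(0))ᵀw(0) = 0, then ξ̄(x(t))ᵀw(t) = 0 for all t ∈ [0,T]. -/

import Mathlib

open MeasureTheory
open scoped RealInnerProductSpace

/-!
Let `f t = ⟪ξ̄(x t), w t⟫`. Differentiating `‖ξ̄‖² = 1` shows `⟪ξ̄(y), Dξ̄(y) v⟫ = 0` off `𝒩`, so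
`ξ̄(x)` is orthogonal both to `P(x) x` and to the `Dξ̄(x) ξ̄(x)` part of `𝐛(x, w)`. Hence
`f' = ⟪Dξ̄(x) (2w), w⟫ + ⟪ξ̄(x), 𝐛(x, w)⟫ = 2 ⟪w, Dξ̄(x) w⟫ − 2 ⟪w, Dξ̄(x) w⟫ = 0`,
and `f` keeps its initial value `0`.
-/

/-- The normalized vector field `ξ̄(x) = ξ(x)/|ξ(x)|` (junk value `0` on `𝒩 = {ξ = 0}`). -/
noncomputable def xibar (d : ℕ) (ξ : EuclideanSpace ℝ (Fin d) → EuclideanSpace ℝ (Fin d))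
    (x : EuclideanSpace ℝ (Fin d)) : EuclideanSpace ℝ (Fin d) :=
  ‖ξ x‖⁻¹ • ξ x

/-- The tangential projection `P(x)v = v − (ξ̄(x)ᵀv)ξ̄(x)`. -/
noncomputable def tangP (d : ℕ) (ξ : EuclideanSpace ℝ (Fin d) → EuclideanSpace ℝ (Fin d))
    (x v : EuclideanSpace ℝ (Fin d)) : EuclideanSpace ℝ (Fin d) :=
  v - ⟪xibar d ξ x, v⟫ • xibar d ξ x

/-- The drift `𝐛(x,w) = −2(r²−|w|²−|x|²)·Dξ̄(x)ξ̄(x) − 2(wᵀDξ̄(x)w)·ξ̄(x)` of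
the limit ODE. -/
noncomputable def limb (d : ℕ) (ξ : EuclideanSpace ℝ (Fin d) → EuclideanSpace ℝ (Fin d))
    (r : ℝ) (x w : EuclideanSpace ℝ (Fin d)) : EuclideanSpace ℝ (Fin d) :=
  (-2 * (r ^ 2 - ‖w‖ ^ 2 - ‖x‖ ^ 2)) • fderiv ℝ (xibar d ξ) x (xibar d ξ x)
    + (-2 * ⟪w, fderiv ℝ (xibar d ξ) x w⟫) • xibar d ξ x

section UnitField

variable {G F : Type*} [NormedAddCommGroup G] [NormedSpace ℝ G]
  [NormedAddCommGroup F] [InnerProductSpace ℝ F]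

theorem inner_fderiv_eq_zero_of_eventually_norm_eq_one {g : G → F} {y : G}
    (hg : DifferentiableAt ℝ g y) (h1 : ∀ᶠ z in nhds y, ‖g z‖ = 1) (v : G) :
    ⟪g y, fderiv ℝ g y v⟫ = 0 := by
  have hconst : (‖g ·‖ ^ 2) =ᶠ[nhds y] fun _ => (1 : ℝ) :=
    h1.mono fun z hz => by simp [hz]
  have hderiv := hg.hasFDerivAt.norm_sq.unique
    ((hasFDerivAt_const (1 : ℝ) y).congr_of_eventuallyEq hconst)
  simpa using congrArg (· v) hderiv

end UnitField

section Xibar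

variable {d : ℕ} {ξ : EuclideanSpace ℝ (Fin d) → EuclideanSpace ℝ (Fin d)}
  {y : EuclideanSpace ℝ (Fin d)}

theorem norm_xibar (h : ξ y ≠ 0) : ‖xibar d ξ y‖ = 1 := by
  simp [xibar, norm_smul, inv_mul_cancel₀ (norm_ne_zero_iff.mpr h)]

theorem inner_xibar_self (h : ξ y ≠ 0) : ⟪xibar d ξ y, xibar d ξ y⟫ = 1 := by
  simp [norm_xibar h]

theorem differentiableAt_xibar (hξ : DifferentiableAt ℝ ξ y) (h : ξ y ≠ 0) :
    DifferentiableAt ℝ (xibar d ξ) y :=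
  ((hξ.norm ℝ h).inv (norm_ne_zero_iff.mpr h)).smul hξ

theorem inner_xibar_fderiv_xibar (hξ : DifferentiableAt ℝ ξ y) (h : ξ y ≠ 0)
    (v : EuclideanSpace ℝ (Fin d)) : ⟪xibar d ξ y, fderiv ℝ (xibar d ξ) y v⟫ = 0 :=
  inner_fderiv_eq_zero_of_eventually_norm_eq_one (differentiableAt_xibar hξ h)
    ((hξ.continuousAt.eventually_ne h).mono fun _ => norm_xibar) v

theorem inner_xibar_tangP (h : ξ y ≠ 0) (v : EuclideanSpace ℝ (Fin d)) :
    ⟪xibar d ξ y, tangP d ξ y v⟫ = 0 := by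
  rw [tangP, inner_sub_right, inner_smul_right, inner_xibar_self h, mul_one, sub_self]

theorem inner_xibar_limb (hξ : DifferentiableAt ℝ ξ y) (h : ξ y ≠ 0) (r : ℝ)
    (v : EuclideanSpace ℝ (Fin d)) :
    ⟪xibar d ξ y, limb d ξ r y v⟫ = -2 * ⟪v, fderiv ℝ (xibar d ξ) y v⟫ := by
  rw [limb, inner_add_right, inner_smul_right, inner_smul_right,
    inner_xibar_fderiv_xibar hξ h, inner_xibar_self h]
  ring

end Xibar

theorem stmt_15_general (d : ℕ)
    (ξ : EuclideanSpace ℝ (Fin d) → EuclideanSpace ℝ (Fin d))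
    (hξ_C2 : ContDiff ℝ 2 ξ)
    (r T : ℝ)
    (x w : ℝ → EuclideanSpace ℝ (Fin d))
    (hx' : ∀ t ∈ Set.Icc (0 : ℝ) T,
      HasDerivWithinAt x ((2 : ℝ) • w t) (Set.Icc (0 : ℝ) T) t)
    (hw' : ∀ t ∈ Set.Icc (0 : ℝ) T,
      HasDerivWithinAt w ((-2 : ℝ) • tangP d ξ (x t) (x t) + limb d ξ r (x t) (w t))
        (Set.Icc (0 : ℝ) T) t)
    (hne : ∀ t ∈ Set.Icc (0 : ℝ) T, ξ (x t) ≠ 0)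
    (h0 : ⟪xibar d ξ (x 0), w 0⟫ = 0) :
    ∀ t ∈ Set.Icc (0 : ℝ) T, ⟪xibar d ξ (x t), w t⟫ = 0 := by
  have hξ : Differentiable ℝ ξ := hξ_C2.differentiable (by norm_num)
  set f : ℝ → ℝ := fun t => ⟪xibar d ξ (x t), w t⟫
  have hf : ∀ t ∈ Set.Icc (0 : ℝ) T, HasDerivWithinAt f 0 (Set.Icc 0 T) t := by
    intro t ht
    have hξbar := (differentiableAt_xibar (hξ (x t)) (hne t ht)).hasFDerivAt
    refine ((hξbar.comp_hasDerivWithinAt t (hx' t ht)).inner ℝ (hw' t ht)).congr_deriv ?_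
    rw [Function.comp_apply, inner_add_right, inner_smul_right, inner_xibar_tangP (hne t ht),
      inner_xibar_limb (hξ (x t)) (hne t ht), map_smul, real_inner_smul_left,
      real_inner_comm]
    ring
  intro t ht
  rw [← h0]
  refine constant_of_derivWithin_zero (fun s hs => (hf s hs).differentiableWithinAt)
    (fun s hs => ?_) t ht
  exact (hf s (Set.Ico_subset_Icc_self hs)).derivWithin
    (uniqueDiffOn_Icc (hs.1.trans_lt hs.2) s (Set.Ico_subset_Icc_self hs))

/-- Along any solution of the limit ODE `x' = 2w`, `w' = −2P(x)x + 𝐛(x,w)` staying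
away from `𝒩 = {ξ = 0}`, the tangentiality relation `ξ̄(x(t))ᵀw(t) = 0` is preserved. -/
theorem stmt_15 (d : ℕ) (U : EuclideanSpace ℝ (Fin d) → ℝ)
    (ξ : EuclideanSpace ℝ (Fin d) → EuclideanSpace ℝ (Fin d))
    (hgrad : ∀ y, HasGradientAt U (ξ y) y) (hξ_C2 : ContDiff ℝ 2 ξ)
    (r T : ℝ) (hr : 0 < r) (hT : 0 ≤ T)
    (x w : ℝ → EuclideanSpace ℝ (Fin d))
    (hx' : ∀ t ∈ Set.Icc (0 : ℝ) T,
      HasDerivWithinAt x ((2 : ℝ) • w t) (Set.Icc (0 : ℝ) T) t)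
    (hw' : ∀ t ∈ Set.Icc (0 : ℝ) T,
      HasDerivWithinAt w ((-2 : ℝ) • tangP d ξ (x t) (x t) + limb d ξ r (x t) (w t))
        (Set.Icc (0 : ℝ) T) t)
    (hne : ∀ t ∈ Set.Icc (0 : ℝ) T, ξ (x t) ≠ 0)
    (h0 : ⟪xibar d ξ (x 0), w 0⟫ = 0) :
    ∀ t ∈ Set.Icc (0 : ℝ) T, ⟪xibar d ξ (x t), w t⟫ = 0 :=
  stmt_15_general d ξ hξ_C2 r T x w hx' hw' hne h0
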